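/- Let n : ℕ and let R ⊆ FreeGroup (Fin n) be a set of relators such that the presentation ⟨Fin n; R⟩ is recursively presented, i.e., REPred (fun l : List (Fin n × Bool) => FreeGroup.mk l ∈ R). Then the 'yes' part of the conjugacy problem for the presented group is recursively enumerable: REPred (fun p : List (Fin n × Bool) × List (Fin n × Bool) => ∃ g : FreeGroup (Fin n), g⁻¹ * FreeGroup.mk p.1 * g * (FreeGroup.mk p.2)⁻¹ ∈ Subgroup.normalClosure R). (Two words w₁, w₂ represent conjugate elements of the presented group exactly when such a conjugator g exists.) -/

import Mathlib

/-!
Encode an element of the free group by its reduced word. Then multiplication and inversion are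
primitive recursive, since free reduction is a right fold. In any group with computable operations,
the normal closure of an r.e. set `R` is r.e.: it is the subgroup generated by the conjugates of
`R`, so `x` lies in it iff some list of conjugates of elements of `R` and of their inverses has
product `x`, and such certificates can be enumerated. Conjugacy modulo the normal closure is then
an existential quantifier over the conjugator, applied to an r.e. predicate.
-/

open Nat.Partrec Encodable

section RE

variable {α β : Type*} [Primcodable α] [Primcodable β]

theorem REPred.exists_primrecRel {p : α → Prop} (hp : REPred p) :
    ∃ q : α → ℕ → Prop, PrimrecRel q ∧ ∀ a, p a ↔ ∃ k, q a k := by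
  obtain ⟨c, hc⟩ := Code.exists_code.1 hp
  refine ⟨fun a k => (Code.evaln k c (encode a)).isSome, ?_, fun a => ?_⟩
  · exact Primrec.eq.comp (Primrec.option_isSome.comp <| Code.primrec_evaln.comp <|
      (Primrec.snd.pair (Primrec.const c)).pair (Primrec.encode.comp Primrec.fst))
      (Primrec.const true)
  · have hdom : p a ↔ (Code.eval c (encode a)).Dom := by
      rw [hc]; simp [Part.dom_iff_mem, Encodable.encodek]
    simp only [hdom, Part.dom_iff_mem, Option.isSome_iff_exists, Code.evaln_complete]
    exact exists_comm

theorem ComputablePred.rePred_exists {q : α → β → Prop}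
    (hq : ComputablePred fun x : α × β => q x.1 x.2) : REPred fun a => ∃ b, q a b := by
  classical
  have hdec : Computable₂ fun a n => decide (∃ b ∈ decode (α := β) n, q a b) := by
    refine (Computable.option_casesOn (Computable.decode.comp Computable.snd)
      (Computable.const false) (hq.decide.comp ((Computable.fst.comp Computable.fst).pair
        Computable.snd)).to₂).of_eq fun x => ?_
    cases h : decode (α := β) x.2 <;> simp [h]
  refine (Partrec.rfind hdec.partrec₂ |>.dom_re).of_eq fun a => ?_
  simp only [Nat.rfind_dom, PFun.coe_val, Part.mem_some_iff, Part.some_dom, implies_true,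
    and_true, true_eq_decide_iff]
  exact ⟨fun ⟨_, b, _, hb⟩ => ⟨b, hb⟩,
    fun ⟨b, hb⟩ => ⟨encode b, b, encodek b, hb⟩⟩

theorem REPred.comp {p : β → Prop} (hp : REPred p) {f : α → β} (hf : Computable f) :
    REPred fun a => p (f a) :=
  Partrec.comp hp hf

protected theorem REPred.exists {p : α → β → Prop}
    (hp : REPred fun x : α × β => p x.1 x.2) :
    REPred fun a => ∃ b, p a b := by
  obtain ⟨q, hq, hpq⟩ := hp.exists_primrecRel
  refine (ComputablePred.rePred_exists (q := fun a (bk : β × ℕ) => q (a, bk.1) bk.2) ?_).of_eq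
    fun a => ?_
  · exact (hq.comp (Primrec.fst.pair (Primrec.fst.comp Primrec.snd))
      (Primrec.snd.comp Primrec.snd)).computablePred
  · exact Prod.exists.trans <| exists_congr fun b => (hpq (a, b)).symm

protected theorem REPred.and {p q : α → Prop} (hp : REPred p) (hq : REPred q) :
    REPred fun a => p a ∧ q a := by
  obtain ⟨p', hp', hpp'⟩ := hp.exists_primrecRel
  obtain ⟨q', hq', hqq'⟩ := hq.exists_primrecRel
  refine (ComputablePred.rePred_exists
    (q := fun a (k : ℕ × ℕ) => p' a k.1 ∧ q' a k.2) ?_).of_eq fun a => ?_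
  · exact ((hp'.comp Primrec.fst (Primrec.fst.comp Primrec.snd)).and
      (hq'.comp Primrec.fst (Primrec.snd.comp Primrec.snd))).computablePred
  · simp [hpp', hqq']

protected theorem REPred.or {p q : α → Prop} (hp : REPred p) (hq : REPred q) :
    REPred fun a => p a ∨ q a := by
  obtain ⟨p', hp', hpp'⟩ := hp.exists_primrecRel
  obtain ⟨q', hq', hqq'⟩ := hq.exists_primrecRel
  refine (ComputablePred.rePred_exists (q := fun a k => p' a k ∨ q' a k) ?_).of_eq fun a => ?_
  · exact (hp'.or hq').computablePred
  · simp [hpp', hqq', exists_or]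

/-- The witnesses for the members of a list can all be found below a common bound. -/
theorem REPred.forall_mem_list {p : α → Prop} (hp : REPred p) :
    REPred fun l : List α => ∀ a ∈ l, p a := by
  obtain ⟨q, hq, hpq⟩ := hp.exists_primrecRel
  refine (ComputablePred.rePred_exists
    (q := fun (l : List α) m => ∀ a ∈ l, ∃ k ∈ List.range m, q a k) ?_).of_eq fun l => ?_
  · have hq' : PrimrecRel fun k a => q a k := hq.comp Primrec.snd Primrec.fst
    have hbounded : PrimrecRel fun a m => ∃ k ∈ List.range m, q a k :=
      hq'.exists_mem_list.comp (Primrec.list_range.comp Primrec.snd) Primrec.fst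
    exact hbounded.forall_mem_list.computablePred
  · simp only [hpq, List.mem_range]
    constructor
    · rintro ⟨m, hm⟩ a ha
      obtain ⟨k, -, hk⟩ := hm a ha
      exact ⟨k, hk⟩
    · classical
      intro h
      choose! k hk using h
      obtain ⟨m, hm⟩ := (l.toFinset.image k).bddAbove
      exact ⟨m + 1, fun a ha =>
        ⟨k a, Nat.lt_succ_of_le (hm (by simpa using ⟨a, ha, rfl⟩)), hk a ha⟩⟩

end RE

section Closure

theorem Primrec.list_prod {M : Type*} [Monoid M] [Primcodable M]
    (hmul : Primrec₂ ((· * ·) : M → M → M)) : Primrec (List.prod : List M → M) :=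
  (Primrec.list_foldr Primrec.id (Primrec.const 1) (hmul.comp (Primrec.fst.comp Primrec.snd)
    (Primrec.snd.comp Primrec.snd)).to₂).of_eq fun _ => List.prod_eq_foldr.symm

theorem REPred.mem_submonoidClosure {M : Type*} [Monoid M] [Primcodable M]
    (hmul : Primrec₂ ((· * ·) : M → M → M)) {s : Set M} (hs : REPred (· ∈ s)) :
    REPred (· ∈ Submonoid.closure s) := by
  have hprod : PrimrecPred fun x : M × List M => x.2.prod = x.1 :=
    Primrec.eq.comp ((Primrec.list_prod hmul).comp Primrec.snd) Primrec.fst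
  refine (REPred.exists (p := fun x (l : List M) => (∀ y ∈ l, y ∈ s) ∧ l.prod = x)
    ((hs.forall_mem_list.comp Computable.snd).and hprod.computablePred.to_re)).of_eq
    fun x => ?_
  rw [← SetLike.mem_coe, Submonoid.closure_eq_image_prod, Set.mem_image]
  rfl

variable {G : Type*} [Group G] [Primcodable G]

theorem REPred.mem_subgroupClosure (hmul : Primrec₂ ((· * ·) : G → G → G))
    (hinv : Primrec fun g : G => g⁻¹) {s : Set G} (hs : REPred (· ∈ s)) :
    REPred (· ∈ Subgroup.closure s) :=
  (REPred.mem_submonoidClosure hmul (s := s ∪ s⁻¹) (hs.or (hs.comp hinv.to_comp))).of_eq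
    fun x => by rw [← Subgroup.mem_toSubmonoid, Subgroup.closure_toSubmonoid]

theorem REPred.mem_conjugatesOfSet (hmul : Primrec₂ ((· * ·) : G → G → G))
    (hinv : Primrec fun g : G => g⁻¹) {s : Set G} (hs : REPred (· ∈ s)) :
    REPred (· ∈ Group.conjugatesOfSet s) := by
  have hconj : PrimrecPred fun x : G × G × G => x.2.2 * x.2.1 * x.2.2⁻¹ = x.1 :=
    Primrec.eq.comp (hmul.comp (hmul.comp (Primrec.snd.comp Primrec.snd)
      (Primrec.fst.comp Primrec.snd)) (hinv.comp (Primrec.snd.comp Primrec.snd))) Primrec.fst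
  refine (REPred.exists (p := fun x (y : G × G) => y.1 ∈ s ∧ y.2 * y.1 * y.2⁻¹ = x)
    ((hs.comp (Computable.fst.comp Computable.snd)).and hconj.computablePred.to_re)).of_eq
    fun x => ?_
  simp [Group.mem_conjugatesOfSet_iff, isConj_iff]

theorem REPred.mem_normalClosure (hmul : Primrec₂ ((· * ·) : G → G → G))
    (hinv : Primrec fun g : G => g⁻¹) {s : Set G} (hs : REPred (· ∈ s)) :
    REPred (· ∈ Subgroup.normalClosure s) :=
  REPred.mem_subgroupClosure hmul hinv (REPred.mem_conjugatesOfSet hmul hinv hs)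

end Closure

namespace FreeGroup

variable {α : Type*}

theorem primrec_invRev [Primcodable α] :
    Primrec (invRev : List (α × Bool) → List (α × Bool)) :=
  Primrec.list_reverse.comp <| Primrec.list_map Primrec.id <|
    (Primrec.fst.comp Primrec.snd).pair (Primrec.not.comp (Primrec.snd.comp Primrec.snd))

variable [DecidableEq α]

def consReduce (x : α × Bool) : List (α × Bool) → List (α × Bool)
  | [] => [x]
  | y :: L => if x.1 = y.1 ∧ x.2 = !y.2 then L else x :: y :: L

theorem reduce_cons_eq_consReduce (x : α × Bool) (L : List (α × Bool)) :
    reduce (x :: L) = consReduce x (reduce L) := by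
  rw [reduce.cons]
  cases reduce L <;> rfl

theorem reduce_eq_foldr (L : List (α × Bool)) : reduce L = L.foldr consReduce [] := by
  induction L with
  | nil => rfl
  | cons x L ih => rw [reduce_cons_eq_consReduce, ih, List.foldr_cons]

variable [Primcodable α]

theorem primrec_consReduce : Primrec₂ (consReduce : α × Bool → List (α × Bool) → _) := by
  have hcancel : PrimrecRel fun (x : α × Bool) (yL : (α × Bool) × List (α × Bool)) =>
      x.1 = yL.1.1 ∧ x.2 = !yL.1.2 :=
    (Primrec.eq.comp (Primrec.fst.comp Primrec.fst)
      (Primrec.fst.comp (Primrec.fst.comp Primrec.snd))).and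
    (Primrec.eq.comp (Primrec.snd.comp Primrec.fst)
      (Primrec.not.comp (Primrec.snd.comp (Primrec.fst.comp Primrec.snd))))
  have hcons : Primrec₂ fun (x : α × Bool) (yL : (α × Bool) × List (α × Bool)) =>
      if x.1 = yL.1.1 ∧ x.2 = !yL.1.2 then yL.2 else x :: yL.1 :: yL.2 :=
    Primrec.ite hcancel (Primrec.snd.comp Primrec.snd) (Primrec.list_cons.comp Primrec.fst
      (Primrec.list_cons.comp (Primrec.fst.comp Primrec.snd) (Primrec.snd.comp Primrec.snd)))
  refine (Primrec.list_casesOn Primrec.snd (Primrec.list_cons.comp Primrec.fst (Primrec.const []))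
    (hcons.comp (Primrec.fst.comp Primrec.fst) Primrec.snd).to₂).of_eq fun x => ?_
  rcases x with ⟨x, _ | ⟨y, L⟩⟩ <;> rfl

theorem primrec_reduce : Primrec (reduce : List (α × Bool) → List (α × Bool)) :=
  (Primrec.list_foldr Primrec.id (Primrec.const []) (primrec_consReduce.comp
    (Primrec.fst.comp Primrec.snd) (Primrec.snd.comp Primrec.snd)).to₂).of_eq
    fun L => (reduce_eq_foldr L).symm

instance : Primcodable {L : List (α × Bool) // reduce L = L} :=
  Primcodable.subtype (Primrec.eq.comp primrec_reduce Primrec.id)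

def toWordEquiv : FreeGroup α ≃ {L : List (α × Bool) // reduce L = L} where
  toFun x := ⟨x.toWord, reduce_toWord x⟩
  invFun L := mk L.1
  left_inv _ := mk_toWord
  right_inv L := Subtype.ext (toWord_mk.trans L.2)

instance : Primcodable (FreeGroup α) := Primcodable.ofEquiv _ toWordEquiv

theorem primrec_toWord : Primrec (toWord : FreeGroup α → List (α × Bool)) :=
  Primrec.subtype_val.comp Primrec.of_equiv

theorem primrec_mk : Primrec (mk : List (α × Bool) → FreeGroup α) :=
  (Primrec.of_equiv_symm.comp
    (Primrec.subtype_mk (h := fun _ => reduce.idem) primrec_reduce)).of_eq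
    fun L => by simp [toWordEquiv, reduce.self]

theorem primrec_mul : Primrec₂ ((· * ·) : FreeGroup α → FreeGroup α → FreeGroup α) :=
  (primrec_mk.comp (Primrec.list_append.comp (primrec_toWord.comp Primrec.fst)
    (primrec_toWord.comp Primrec.snd))).of_eq fun x => by rw [← mul_mk, mk_toWord, mk_toWord]

theorem primrec_inv : Primrec fun x : FreeGroup α => x⁻¹ :=
  (primrec_mk.comp (primrec_invRev.comp primrec_toWord)).of_eq
    fun x => by rw [← inv_mk, mk_toWord]

end FreeGroup

open FreeGroup in
/-- The "yes" part of the conjugacy problem in a recursively presented group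
`⟨Fin n; R⟩` is recursively enumerable. -/
theorem conjugacy_problem_yes_part_re (n : ℕ) (R : Set (FreeGroup (Fin n)))
    (hR : REPred (fun l : List (Fin n × Bool) => FreeGroup.mk l ∈ R)) :
    REPred (fun p : List (Fin n × Bool) × List (Fin n × Bool) =>
      ∃ g : FreeGroup (Fin n),
        g⁻¹ * FreeGroup.mk p.1 * g * (FreeGroup.mk p.2)⁻¹ ∈
          Subgroup.normalClosure R) := by
  have hR' : REPred (· ∈ R) :=
    (hR.comp primrec_toWord.to_comp).of_eq fun x => by rw [mk_toWord]
  have hN := REPred.mem_normalClosure primrec_mul primrec_inv hR'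
  have hconj : Primrec
      fun x : (List (Fin n × Bool) × List (Fin n × Bool)) × FreeGroup (Fin n) =>
        x.2⁻¹ * mk x.1.1 * x.2 * (mk x.1.2)⁻¹ :=
    primrec_mul.comp (primrec_mul.comp (primrec_mul.comp (primrec_inv.comp Primrec.snd)
      (primrec_mk.comp (Primrec.fst.comp Primrec.fst))) Primrec.snd)
      (primrec_inv.comp (primrec_mk.comp (Primrec.snd.comp Primrec.fst)))
  exact REPred.exists (hN.comp hconj.to_comp)
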